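/- arXiv:2408.03017 — 4 statements merged into one kernel-verified Lean document; each statement's English description precedes it below -/
import Mathlib

section
/- Let σ : [0,L] × ℝ → ℝ be continuous, continuously differentiable in θ, with |∂σ/∂θ(s,θ)| ≤ K for all (s,θ) and with 0 ≤ K < (π/(2L))². Then the two-point boundary value problem θ''(s) = σ(s, θ(s)) with θ(0) = 0 and θ'(L) = 0 has a solution. -/
/-!
`-min s t` is the Green's function of `θ'' = g`, `θ 0 = 0`, `θ' L = 0` on `[0, L]`, so solutions
are the fixed points of the Picard map `θ ↦ -∫₀ᴸ min s t * σ t (θ t) dt` on `C([0, L])`.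
Pick `b` with `K < b² < (π / 2L)²`. The weight `φ s = cos (b (L - s))` solves `φ'' = -b² φ`,
`φ' L = 0`, `φ 0 ≥ 0`, hence `b² ∫₀ᴸ min s t * φ t dt ≤ φ s`, and the Picard map shrinks bounds
of the form `|θ₁ - θ₂| ≤ c φ` by the factor `K / b² < 1`. Since `φ ≥ cos (b L) > 0` on `[0, L]`,
some iterate of the Picard map is a sup-norm contraction, whose fixed point is also one of the
Picard map.
-/

open Real Set intervalIntegral

theorem integral_min_mul_deriv2_eq {u u' u'' : ℝ → ℝ} {s L : ℝ}
    (hu : ∀ t, HasDerivAt u (u' t) t) (hu' : ∀ t, HasDerivAt u' (u'' t) t)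
    (hu'' : Continuous u'') (hs : s ∈ Icc 0 L) :
    ∫ t in 0..L, min s t * u'' t = s * u' L - u s + u 0 := by
  have hcont' : Continuous u' := continuous_iff_continuousAt.2 fun t => (hu' t).continuousAt
  have hcont : Continuous fun t => min s t * u'' t := by fun_prop
  have hleft : ∫ t in 0..s, min s t * u'' t = s * u' s - (u s - u 0) := by
    rw [integral_congr (g := fun t => t * u'' t) fun t ht => by
        rw [uIcc_of_le hs.1] at ht; simp only [min_eq_right ht.2],
      integral_mul_deriv_eq_deriv_mul (fun t _ => hasDerivAt_id' t) (fun t _ => hu' t)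
        intervalIntegrable_const (hu''.intervalIntegrable _ _),
      integral_eq_sub_of_hasDerivAt (fun t _ => by simpa using hu t)
        (by simpa using hcont'.intervalIntegrable 0 s)]
    simp
  have hright : ∫ t in s..L, min s t * u'' t = s * (u' L - u' s) := by
    rw [integral_congr (g := fun t => s * u'' t) fun t ht => by
        rw [uIcc_of_le hs.2] at ht; simp only [min_eq_left ht.1],
      intervalIntegral.integral_const_mul,
      integral_eq_sub_of_hasDerivAt (fun t _ => hu' t) (hu''.intervalIntegrable _ _)]
  rw [← integral_add_adjacent_intervals (hcont.intervalIntegrable 0 s)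
    (hcont.intervalIntegrable s L), hleft, hright]
  ring

theorem sq_mul_integral_min_mul_cos_le {b L s : ℝ} (hb : 0 ≤ b) (hbL : b * L ≤ π / 2)
    (hs : s ∈ Icc 0 L) :
    b ^ 2 * ∫ t in 0..L, min s t * cos (b * (L - t)) ≤ cos (b * (L - s)) := by
  have hu : ∀ t, HasDerivAt (fun t => cos (b * (L - t))) (b * sin (b * (L - t))) t := by
    intro t
    exact (((hasDerivAt_id t).const_sub L).const_mul b).cos.congr_deriv (by simp only [id]; ring)
  have hu' : ∀ t, HasDerivAt (fun t => b * sin (b * (L - t))) (-b ^ 2 * cos (b * (L - t))) t := by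
    intro t
    exact ((((hasDerivAt_id t).const_sub L).const_mul b).sin.const_mul b).congr_deriv
      (by simp only [id]; ring)
  have key := integral_min_mul_deriv2_eq hu hu' (by fun_prop) hs
  have hcos : 0 ≤ cos (b * L) :=
    cos_nonneg_of_mem_Icc ⟨by nlinarith [pi_pos, hs.1.trans hs.2], hbL⟩
  simp only [sub_self, mul_zero, sin_zero, sub_zero] at key
  have hpull : ∫ t in 0..L, min s t * (-b ^ 2 * cos (b * (L - t)))
      = -b ^ 2 * ∫ t in 0..L, min s t * cos (b * (L - t)) := by
    rw [← intervalIntegral.integral_const_mul]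
    congr 1 with t
    ring
  linarith

theorem abs_sub_le_mul_of_abs_deriv_le {f : ℝ → ℝ} {K : ℝ} (hf : Differentiable ℝ f)
    (hK : ∀ t, |deriv f t| ≤ K) (x y : ℝ) : |f x - f y| ≤ K * |x - y| :=
  convex_univ.norm_image_sub_le_of_norm_deriv_le (fun z _ => hf z) (fun z _ => hK z)
    (mem_univ y) (mem_univ x)

noncomputable def clampedFreeSolution (L : ℝ) (g : ℝ → ℝ) (s : ℝ) : ℝ :=
  ∫ u in 0..s, ∫ t in L..u, g t

section clampedFreeSolution

variable {L : ℝ} {g : ℝ → ℝ}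

theorem hasDerivAt_clampedFreeSolution (hg : Continuous g) (s : ℝ) :
    HasDerivAt (clampedFreeSolution L g) (∫ t in L..s, g t) s :=
  ((continuous_primitive (fun _ _ => hg.intervalIntegrable _ _) L).integral_hasStrictDerivAt
    0 s).hasDerivAt

theorem deriv_clampedFreeSolution (hg : Continuous g) :
    deriv (clampedFreeSolution L g) = fun s => ∫ t in L..s, g t :=
  funext fun s => (hasDerivAt_clampedFreeSolution hg s).deriv

theorem deriv_deriv_clampedFreeSolution (hg : Continuous g) :
    deriv (deriv (clampedFreeSolution L g)) = g := by
  rw [deriv_clampedFreeSolution hg]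
  exact funext (hg.deriv_integral g L)

theorem contDiff_clampedFreeSolution (hg : Continuous g) :
    ContDiff ℝ 2 (clampedFreeSolution L g) := by
  refine (contDiff_succ_iff_deriv (n := 1)).2
    ⟨fun s => (hasDerivAt_clampedFreeSolution hg s).differentiableAt, by simp, ?_⟩
  rw [deriv_clampedFreeSolution hg]
  exact contDiff_one_iff_deriv.2
    ⟨fun s => (hg.integral_hasStrictDerivAt L s).hasDerivAt.differentiableAt,
      by rw [funext (hg.deriv_integral g L)]; exact hg⟩

theorem clampedFreeSolution_zero : clampedFreeSolution L g 0 = 0 :=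
  integral_same

theorem deriv_clampedFreeSolution_right (hg : Continuous g) :
    deriv (clampedFreeSolution L g) L = 0 := by
  simp [deriv_clampedFreeSolution hg]

theorem clampedFreeSolution_eq_neg_integral (hg : Continuous g) {s : ℝ} (hs : s ∈ Icc 0 L) :
    clampedFreeSolution L g s = -∫ t in 0..L, min s t * g t := by
  have := integral_min_mul_deriv2_eq (hasDerivAt_clampedFreeSolution hg)
    (fun t => (hg.integral_hasStrictDerivAt L t).hasDerivAt) hg hs
  simp only [integral_same, mul_zero, clampedFreeSolution_zero, add_zero, zero_sub] at this
  linarith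

theorem abs_clampedFreeSolution_sub_le {g₁ g₂ h : ℝ → ℝ} (hg₁ : Continuous g₁)
    (hg₂ : Continuous g₂) (hh : Continuous h) (hgh : ∀ t ∈ Icc 0 L, |g₁ t - g₂ t| ≤ h t)
    {s : ℝ} (hs : s ∈ Icc 0 L) :
    |clampedFreeSolution L g₁ s - clampedFreeSolution L g₂ s| ≤ ∫ t in 0..L, min s t * h t := by
  have hL : 0 ≤ L := hs.1.trans hs.2
  rw [clampedFreeSolution_eq_neg_integral hg₁ hs, clampedFreeSolution_eq_neg_integral hg₂ hs,
    neg_sub_neg, ← integral_sub (Continuous.intervalIntegrable (by fun_prop) _ _)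
      (Continuous.intervalIntegrable (by fun_prop) _ _)]
  refine (abs_integral_le_integral_abs hL).trans <|
    integral_mono_on hL (Continuous.intervalIntegrable (by fun_prop) _ _)
      (Continuous.intervalIntegrable (by fun_prop) _ _) fun t ht => ?_
  rw [← mul_sub, abs_mul, abs_of_nonneg (le_min hs.1 ht.1), abs_sub_comm]
  exact mul_le_mul_of_nonneg_left (hgh t ht) (le_min hs.1 ht.1)

end clampedFreeSolution

section Picard

variable {L K : ℝ} {σ : ℝ → ℝ → ℝ}

noncomputable def nemytskii (hσ : ContinuousOn (Function.uncurry σ) (Icc 0 L ×ˢ univ))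
    (θ : C(Icc 0 L, ℝ)) : C(Icc 0 L, ℝ) :=
  ⟨fun t => σ t (θ t), hσ.comp_continuous (continuous_subtype_val.prodMk θ.continuous)
    fun t => ⟨t.2, mem_univ _⟩⟩

noncomputable def picardMap (hL : 0 ≤ L)
    (hσ : ContinuousOn (Function.uncurry σ) (Icc 0 L ×ˢ univ)) (θ : C(Icc 0 L, ℝ)) :
    C(Icc 0 L, ℝ) :=
  ⟨fun s => clampedFreeSolution L (ContinuousMap.IccExtend hL (nemytskii hσ θ)) s,
    (contDiff_clampedFreeSolution (ContinuousMap.IccExtend hL _).continuous).continuous.comp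
      continuous_subtype_val⟩

variable (hσc : ContinuousOn (Function.uncurry σ) (Icc 0 L ×ˢ univ))

theorem abs_picardMap_sub_le (hL : 0 ≤ L) (hK0 : 0 ≤ K)
    (hσlip : ∀ t ∈ Icc 0 L, ∀ x y, |σ t x - σ t y| ≤ K * |x - y|) {b c : ℝ} (hb : 0 < b)
    (hbL : b * L ≤ π / 2) (hc : 0 ≤ c)
    {θ₁ θ₂ : C(Icc 0 L, ℝ)} (hθ : ∀ t : Icc 0 L, |θ₁ t - θ₂ t| ≤ c * cos (b * (L - t)))
    (s : Icc 0 L) :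
    |picardMap hL hσc θ₁ s - picardMap hL hσc θ₂ s| ≤ c * (K / b ^ 2) * cos (b * (L - s)) := by
  have hforcing : ∀ t ∈ Icc 0 L,
      |ContinuousMap.IccExtend hL (nemytskii hσc θ₁) t
        - ContinuousMap.IccExtend hL (nemytskii hσc θ₂) t| ≤ K * (c * cos (b * (L - t))) := by
    intro t ht
    simp only [ContinuousMap.coe_IccExtend, IccExtend_of_mem _ _ ht]
    exact (hσlip t ht _ _).trans (mul_le_mul_of_nonneg_left (hθ ⟨t, ht⟩) hK0)
  have hweight := sq_mul_integral_min_mul_cos_le hb.le hbL s.2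
  calc |picardMap hL hσc θ₁ s - picardMap hL hσc θ₂ s|
      ≤ ∫ t in 0..L, min (s : ℝ) t * (K * (c * cos (b * (L - t)))) :=
        abs_clampedFreeSolution_sub_le (ContinuousMap.continuous _) (ContinuousMap.continuous _)
          (by fun_prop) hforcing s.2
    _ = c * K * ∫ t in 0..L, min (s : ℝ) t * cos (b * (L - t)) := by
        rw [← intervalIntegral.integral_const_mul]
        congr 1 with t
        ring
    _ ≤ c * K * (cos (b * (L - s)) / b ^ 2) := by
        gcongr
        rw [le_div_iff₀ (by positivity)]
        linarith
    _ = c * (K / b ^ 2) * cos (b * (L - s)) := by ring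

theorem dist_picardMap_iterate_le (hL : 0 ≤ L) (hK0 : 0 ≤ K)
    (hσlip : ∀ t ∈ Icc 0 L, ∀ x y, |σ t x - σ t y| ≤ K * |x - y|) {b : ℝ} (hb : 0 < b)
    (hbL : b * L < π / 2) (n : ℕ) (θ₁ θ₂ : C(Icc 0 L, ℝ)) :
    dist ((picardMap hL hσc)^[n] θ₁) ((picardMap hL hσc)^[n] θ₂)
      ≤ (K / b ^ 2) ^ n / cos (b * L) * dist θ₁ θ₂ := by
  have hcosL : 0 < cos (b * L) := cos_pos_of_mem_Ioo ⟨by nlinarith [pi_pos], hbL⟩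
  have hweight : ∀ t : Icc 0 L, cos (b * L) ≤ cos (b * (L - t)) := fun t =>
    cos_le_cos_of_nonneg_of_le_pi (mul_nonneg hb.le (sub_nonneg.2 t.2.2)) (by linarith [pi_pos])
      (mul_le_mul_of_nonneg_left (sub_le_self _ t.2.1) hb.le)
  have hpointwise : ∀ n (s : Icc 0 L),
      |(picardMap hL hσc)^[n] θ₁ s - (picardMap hL hσc)^[n] θ₂ s|
        ≤ dist θ₁ θ₂ / cos (b * L) * (K / b ^ 2) ^ n * cos (b * (L - s)) := by
    intro n
    induction n with
    | zero =>
      intro s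
      rw [Function.iterate_zero_apply, Function.iterate_zero_apply, pow_zero, mul_one,
        div_mul_eq_mul_div, le_div_iff₀ hcosL, ← Real.dist_eq]
      exact mul_le_mul (ContinuousMap.dist_apply_le_dist s) (hweight s) hcosL.le dist_nonneg
    | succ n ih =>
      intro s
      rw [Function.iterate_succ_apply', Function.iterate_succ_apply', pow_succ, ← mul_assoc]
      exact abs_picardMap_sub_le hσc hL hK0 hσlip hb hbL.le (by positivity) ih s
  refine (ContinuousMap.dist_le (by positivity)).2 fun s => ?_
  calc dist ((picardMap hL hσc)^[n] θ₁ s) ((picardMap hL hσc)^[n] θ₂ s)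
      ≤ dist θ₁ θ₂ / cos (b * L) * (K / b ^ 2) ^ n * cos (b * (L - s)) := hpointwise n s
    _ ≤ dist θ₁ θ₂ / cos (b * L) * (K / b ^ 2) ^ n * 1 := by gcongr; exact cos_le_one _
    _ = (K / b ^ 2) ^ n / cos (b * L) * dist θ₁ θ₂ := by ring

theorem exists_fixedPoint_picardMap (hL : 0 < L) (hK0 : 0 ≤ K)
    (hσlip : ∀ t ∈ Icc 0 L, ∀ x y, |σ t x - σ t y| ≤ K * |x - y|) (hK : K < (π / (2 * L)) ^ 2) :
    ∃ θ, picardMap hL.le hσc θ = θ := by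
  obtain ⟨b, hKb, hbπ⟩ := exists_between ((sqrt_lt' (by positivity)).2 hK)
  have hb : 0 < b := (sqrt_nonneg K).trans_lt hKb
  have hbL : b * L < π / 2 := by
    have := (lt_div_iff₀ (by positivity)).1 hbπ
    linarith
  have hcosL : 0 < cos (b * L) := cos_pos_of_mem_Ioo ⟨by nlinarith [pi_pos], hbL⟩
  obtain ⟨n, hn⟩ := exists_pow_lt_of_lt_one hcosL
    ((div_lt_one (by positivity)).2 ((sqrt_lt' hb).1 hKb))
  have hcontr : ContractingWith (⟨(K / b ^ 2) ^ n / cos (b * L), by positivity⟩ : NNReal)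
      (picardMap hL.le hσc)^[n] :=
    ⟨NNReal.coe_lt_one.1 ((div_lt_one hcosL).2 hn),
      LipschitzWith.of_dist_le_mul (dist_picardMap_iterate_le hσc hL.le hK0 hσlip hb hbL n)⟩
  exact ⟨_, hcontr.isFixedPt_fixedPoint_iterate⟩

end Picard

/-- existence of a solution to the two-point boundary value problem
`θ'' = σ(s, θ)`, `θ(0) = 0`, `θ'(L) = 0`, when `σ` is continuous on `[0,L] × ℝ`,
continuously differentiable in `θ`, with `|∂σ/∂θ| ≤ K` and `0 ≤ K < (π/(2L))²`. -/
theorem bvp_exists_solution (L K : ℝ) (hL : 0 < L) (σ : ℝ → ℝ → ℝ)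
    (hσc : ContinuousOn (Function.uncurry σ) (Icc 0 L ×ˢ (univ : Set ℝ)))
    (hσd : ∀ s ∈ Icc 0 L, ContDiff ℝ 1 (σ s))
    (hK0 : 0 ≤ K) (hK : K < (π / (2 * L)) ^ 2)
    (hlip : ∀ s ∈ Icc 0 L, ∀ t : ℝ, |deriv (σ s) t| ≤ K) :
    ∃ θ : ℝ → ℝ, ContDiff ℝ 2 θ ∧
      (∀ s ∈ Icc 0 L, deriv (deriv θ) s = σ s (θ s)) ∧
      θ 0 = 0 ∧ deriv θ L = 0 := by
  obtain ⟨θ, hθ⟩ := exists_fixedPoint_picardMap hσc hL hK0 (fun t ht =>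
    abs_sub_le_mul_of_abs_deriv_le ((hσd t ht).differentiable one_ne_zero) (hlip t ht)) hK
  set g := ContinuousMap.IccExtend hL.le (nemytskii hσc θ)
  refine ⟨clampedFreeSolution L g, contDiff_clampedFreeSolution g.continuous, fun s hs => ?_,
    clampedFreeSolution_zero, deriv_clampedFreeSolution_right g.continuous⟩
  have hfix : clampedFreeSolution L g s = θ ⟨s, hs⟩ := by
    rw [← hθ]
    rfl
  rw [deriv_deriv_clampedFreeSolution g.continuous, hfix]
  simp only [g, ContinuousMap.coe_IccExtend, IccExtend_of_mem _ _ hs]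
  rfl
end

section
/- Let K ≥ 0 with √K L < π/2, and let J⁽²⁾ : [0,L] → ℝ solve J'' = q(s)J with J(0) = 0, J'(0) = 1, where q : [0,L] → ℝ is continuous with |q(s)| ≤ K. Then J⁽²⁾'(s) > 0 for all s ∈ [0,L]; in particular J⁽²⁾'(L) > 0. -/
/-!
Let `t` be the first zero of `J'`. Then `J` increases on `[0, t]`, so `J ≥ 0` there and
`J'' = q J ≥ -k² J` for any `k > 0` with `K ≤ k²`. Hence the Wronskian-type function
`G = J' sin (k s) - k J cos (k s)`, with `G' = (J'' + k² J) sin (k s) ≥ 0` and `G 0 = 0`,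
stays nonnegative, giving `J'(t) sin (k t) ≥ k J(t) cos (k t) > 0` as long as `k t < π / 2`:
a contradiction. Since `√K L < π / 2` is strict, such a `k` exists with `k L < π / 2`.
-/

open Real Set

theorem ContinuousOn.forall_Icc_pos_of_forall_Ico_pos {f : ℝ → ℝ} {a b : ℝ}
    (hf : ContinuousOn f (Icc a b))
    (hstep : ∀ t ∈ Icc a b, (∀ s ∈ Ico a t, 0 < f s) → 0 < f t) :
    ∀ s ∈ Icc a b, 0 < f s := by
  by_contra! h
  have hbad : IsCompact (Icc a b ∩ f ⁻¹' Iic 0) :=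
    isCompact_Icc.of_isClosed_subset
      (hf.preimage_isClosed_of_isClosed isClosed_Icc isClosed_Iic) inter_subset_left
  obtain ⟨t, ⟨ht, hft⟩, hleast⟩ := hbad.exists_isLeast (by simpa [Set.Nonempty] using h)
  refine (hstep t ht fun s hs => ?_).not_ge hft
  by_contra! hfs
  exact hs.2.not_ge (hleast ⟨⟨hs.1, hs.2.le.trans ht.2⟩, hfs⟩)

theorem mul_cos_le_deriv_mul_sin {J : ℝ → ℝ} {k t : ℝ} (hk : 0 ≤ k) (ht : 0 ≤ t)
    (hkt : k * t ≤ π) (hJ : Differentiable ℝ J) (hJ' : Differentiable ℝ (deriv J))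
    (h0 : J 0 = 0) (hcomp : ∀ s ∈ Icc 0 t, -k ^ 2 * J s ≤ deriv (deriv J) s) :
    k * J t * cos (k * t) ≤ deriv J t * sin (k * t) := by
  set G : ℝ → ℝ := fun s => deriv J s * sin (k * s) - k * J s * cos (k * s)
  have hG : ∀ s, HasDerivAt G ((deriv (deriv J) s + k ^ 2 * J s) * sin (k * s)) s := by
    intro s
    have hks := (hasDerivAt_id' s).const_mul k
    exact (((hJ' s).hasDerivAt.mul hks.sin).sub
      (((hJ s).hasDerivAt.const_mul k).mul hks.cos)).congr_deriv (by ring)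
  have hmono : MonotoneOn G (Icc 0 t) := by
    refine monotoneOn_of_hasDerivWithinAt_nonneg (convex_Icc 0 t)
      (continuous_iff_continuousAt.2 fun s => (hG s).continuousAt).continuousOn
      (fun s _ => (hG s).hasDerivWithinAt) fun s hs => ?_
    rw [interior_Icc] at hs
    have hsin : 0 ≤ sin (k * s) :=
      sin_nonneg_of_nonneg_of_le_pi (by nlinarith [hs.1]) (by nlinarith [hs.2])
    have hJ'' := hcomp s (Ioo_subset_Icc_self hs)
    exact mul_nonneg (by linarith) hsin
  have := hmono (left_mem_Icc.2 ht) (right_mem_Icc.2 ht) ht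
  simpa [G, h0, sub_nonneg] using this

theorem deriv_pos_of_forall_Ico_deriv_pos {J : ℝ → ℝ} {k t : ℝ} (hk : 0 < k) (ht : 0 < t)
    (hkt : k * t < π / 2) (hJ : Differentiable ℝ J) (hJ' : Differentiable ℝ (deriv J))
    (h0 : J 0 = 0) (hpos : ∀ s ∈ Ico 0 t, 0 < deriv J s)
    (hcomp : ∀ s ∈ Icc 0 t, 0 ≤ J s → -k ^ 2 * J s ≤ deriv (deriv J) s) :
    0 < deriv J t := by
  have hmono : StrictMonoOn J (Icc 0 t) :=
    strictMonoOn_of_deriv_pos (convex_Icc 0 t) hJ.continuous.continuousOn fun s hs =>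
      hpos s (Ioo_subset_Ico_self (by rwa [interior_Icc] at hs))
  have hJ_nonneg : ∀ s ∈ Icc 0 t, 0 ≤ J s := fun s hs =>
    h0 ▸ hmono.monotoneOn (left_mem_Icc.2 ht.le) hs hs.1
  have hJt : 0 < J t := h0 ▸ hmono (left_mem_Icc.2 ht.le) (right_mem_Icc.2 ht.le) ht
  have hcmp := mul_cos_le_deriv_mul_sin hk.le ht.le (by linarith [pi_pos]) hJ hJ' h0
    fun s hs => hcomp s hs (hJ_nonneg s hs)
  have hcos : 0 < cos (k * t) := cos_pos_of_mem_Ioo ⟨by nlinarith [pi_pos], hkt⟩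
  have hsin : 0 ≤ sin (k * t) :=
    sin_nonneg_of_nonneg_of_le_pi (by positivity) (by linarith [pi_pos])
  exact pos_of_mul_pos_left ((by positivity : 0 < k * J t * cos (k * t)).trans_le hcmp) hsin

theorem shooting_solution_deriv_pos_general (L K : ℝ) (hL : 0 < L) (hK : 0 ≤ K)
    (hKL : Real.sqrt K * L < π / 2) (q : ℝ → ℝ)
    (hqK : ∀ s ∈ Icc 0 L, |q s| ≤ K)
    (J : ℝ → ℝ) (hJ : ContDiff ℝ 2 J)
    (hode : ∀ s ∈ Icc 0 L, deriv (deriv J) s = q s * J s)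
    (h0 : J 0 = 0) (h1 : deriv J 0 = 1) :
    ∀ s ∈ Icc 0 L, 0 < deriv J s := by
  set k := max (√K) (π / (4 * L))
  have hk : 0 < k := lt_max_of_lt_right (by positivity)
  have hKk : K ≤ k ^ 2 := (sq_sqrt hK).symm.le.trans (by gcongr; exact le_max_left _ _)
  have hkL : k * L < π / 2 := by
    rw [max_mul_of_nonneg _ _ hL.le]
    refine max_lt hKL ?_
    field_simp
    linarith [pi_pos]
  have hJ1 : Differentiable ℝ J := hJ.differentiable (by norm_num)
  have hJ2 : Differentiable ℝ (deriv J) :=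
    (hJ.iterate_deriv' 1 1).differentiable (by norm_num)
  refine hJ2.continuous.continuousOn.forall_Icc_pos_of_forall_Ico_pos fun t ht hpos => ?_
  rcases ht.1.eq_or_lt with rfl | ht0
  · exact h1 ▸ one_pos
  refine deriv_pos_of_forall_Ico_deriv_pos hk ht0 (by nlinarith [ht.2]) hJ1 hJ2 h0 hpos
    fun s hs hJs => ?_
  have hsL : s ∈ Icc 0 L := ⟨hs.1, hs.2.trans ht.2⟩
  rw [hode s hsL]
  nlinarith [neg_abs_le (q s), hqK s hsL]

/-- if `J'' = q(s) J` with `J(0) = 0`, `J'(0) = 1`, `|q| ≤ K`,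
`K ≥ 0` and `√K · L < π/2`, then `J' > 0` on all of `[0, L]`
(in particular `J'(L) > 0`). -/
theorem shooting_solution_deriv_pos (L K : ℝ) (hL : 0 < L) (hK : 0 ≤ K)
    (hKL : Real.sqrt K * L < π / 2) (q : ℝ → ℝ)
    (hq : ContinuousOn q (Icc 0 L)) (hqK : ∀ s ∈ Icc 0 L, |q s| ≤ K)
    (J : ℝ → ℝ) (hJ : ContDiff ℝ 2 J)
    (hode : ∀ s ∈ Icc 0 L, deriv (deriv J) s = q s * J s)
    (h0 : J 0 = 0) (h1 : deriv J 0 = 1) :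
    ∀ s ∈ Icc 0 L, 0 < deriv J s :=
  shooting_solution_deriv_pos_general L K hL hK hKL q hqK J hJ hode h0 h1
end

section
/- Under the hypotheses that q : [0,L] → ℝ is continuous with |q(s)| ≤ K and KL² < π²/4, and g : [0,L] → ℝ is continuous, the Sturm–Liouville boundary value problem J''(s) = q(s)J(s) + g(s), J(0) = 0, J'(L) = 0 has a unique solution, given by J(s) = J⁽¹⁾(s) + v J⁽²⁾(s), where J⁽¹⁾ solves J'' = qJ + g with J(0) = J'(0) = 0, J⁽²⁾ solves J'' = qJ with J(0) = 0, J'(0) = 1, and v = −J⁽¹⁾'(L)/J⁽²⁾'(L). -/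
/-!
The shooting solutions `J₁ + c J₂` solve the ODE with `J(0) = 0` for every slope `c`, and by
Grönwall's inequality for the first-order system `(J, J')` every solution with `J(0) = 0` is the
shot with `c = J'(0)`. The boundary condition `J'(L) = 0` then pins down `c = v`, provided
`J₂'(L) ≠ 0`. For that, pick `k > 0` with `K < k²` and `k L < π / 2`; the Wronskian of `J₂`
against `sin (k s)` is nondecreasing as long as `J₂' > 0`, which rules out a first zero of `J₂'`
in `(0, L]`, where the Wronskian would be negative.
-/

open Real Set

theorem exists_first_nonpos_of_continuousOn {f : ℝ → ℝ} {a b : ℝ}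
    (hf : ContinuousOn f (Icc a b)) (ha : 0 < f a) (h : ∃ t ∈ Icc a b, f t ≤ 0) :
    ∃ t₀ ∈ Ioc a b, f t₀ ≤ 0 ∧ ∀ s ∈ Ico a t₀, 0 < f s := by
  set S := Icc a b ∩ f ⁻¹' Iic 0
  have hS : IsClosed S := hf.preimage_isClosed_of_isClosed isClosed_Icc isClosed_Iic
  have hbdd : BddBelow S := ⟨a, fun t ht => ht.1.1⟩
  obtain ⟨⟨hat₀, ht₀b⟩, ht₀⟩ : sInf S ∈ S := hS.csInf_mem h hbdd
  refine ⟨sInf S, ⟨hat₀.lt_of_ne ?_, ht₀b⟩, ht₀, fun s hs => ?_⟩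
  · intro h
    rw [h] at ha
    exact ht₀.not_gt ha
  · by_contra! hfs
    exact (csInf_le hbdd ⟨⟨hs.1, hs.2.le.trans ht₀b⟩, hfs⟩).not_gt hs.2

theorem hasDerivAt_wronskian_sin {y : ℝ → ℝ} (hy : ContDiff ℝ 2 y) (k s : ℝ) :
    HasDerivAt (fun s => deriv y s * sin (k * s) - y s * (k * cos (k * s)))
      ((deriv (deriv y) s + k ^ 2 * y s) * sin (k * s)) s := by
  have hks : HasDerivAt (fun s => k * s) k s := by simpa using (hasDerivAt_id s).const_mul k
  refine (((hy.differentiable_deriv_two s).hasDerivAt.mul hks.sin).sub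
    ((hy.differentiable two_ne_zero s).hasDerivAt.mul (hks.cos.const_mul k))).congr_deriv ?_
  ring

theorem deriv_pos_of_deriv_deriv_eq_mul {q y : ℝ → ℝ} {k L : ℝ} (hk : 0 < k)
    (hkL : k * L < π / 2) (hq : ∀ s ∈ Icc 0 L, -k ^ 2 ≤ q s) (hy : ContDiff ℝ 2 y)
    (hode : ∀ s ∈ Icc 0 L, deriv (deriv y) s = q s * y s) (h0 : y 0 = 0)
    (h0' : 0 < deriv y 0) :
    ∀ s ∈ Icc 0 L, 0 < deriv y s := by
  by_contra! hneg
  obtain ⟨t, ⟨ht, htL⟩, hyt, hpos⟩ :=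
    exists_first_nonpos_of_continuousOn (hy.continuous_deriv (by norm_num)).continuousOn h0' hneg
  have hmono : StrictMonoOn y (Icc 0 t) :=
    strictMonoOn_of_deriv_pos (convex_Icc 0 t) (hy.continuous.continuousOn) fun s hs => by
      rw [interior_Icc] at hs
      exact hpos s ⟨hs.1.le, hs.2⟩
  have hy_nonneg : ∀ s ∈ Icc 0 t, 0 ≤ y s := fun s hs =>
    h0 ▸ hmono.monotoneOn ⟨le_rfl, ht.le⟩ hs hs.1
  have hyt_pos : 0 < y t := h0 ▸ hmono ⟨le_rfl, ht.le⟩ ⟨ht.le, le_rfl⟩ ht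
  set W := fun s => deriv y s * sin (k * s) - y s * (k * cos (k * s))
  -- Sturm comparison with `sin (k s)`, which solves `φ'' = -k² φ` and is positive on `(0, π / k)`.
  have hW : MonotoneOn W (Icc 0 t) := by
    refine monotoneOn_of_hasDerivWithinAt_nonneg (convex_Icc 0 t)
      (fun s _ => (hasDerivAt_wronskian_sin hy k s).continuousAt.continuousWithinAt)
      (fun s _ => (hasDerivAt_wronskian_sin hy k s).hasDerivWithinAt) fun s hs => ?_
    rw [interior_Icc] at hs
    have hsL : s ∈ Icc 0 L := ⟨hs.1.le, hs.2.le.trans htL⟩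
    rw [hode s hsL, ← add_mul]
    refine mul_nonneg (mul_nonneg (by linarith [hq s hsL]) (hy_nonneg s ⟨hs.1.le, hs.2.le⟩))
      (sin_nonneg_of_nonneg_of_le_pi (mul_nonneg hk.le hs.1.le) ?_)
    nlinarith [pi_pos, mul_le_mul_of_nonneg_left (hs.2.le.trans htL) hk.le]
  have hWt : W t < 0 := by
    have hsin : 0 ≤ sin (k * t) := sin_nonneg_of_nonneg_of_le_pi (mul_nonneg hk.le ht.le)
      (by nlinarith [pi_pos, mul_le_mul_of_nonneg_left htL hk.le])
    have hcos : 0 < cos (k * t) := cos_pos_of_mem_Ioo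
      ⟨by nlinarith [pi_pos, mul_pos hk ht], by nlinarith [mul_le_mul_of_nonneg_left htL hk.le]⟩
    have := mul_pos hyt_pos (mul_pos hk hcos)
    nlinarith [mul_nonpos_of_nonpos_of_nonneg hyt hsin]
  have hW0 : W 0 = 0 := by simp [W, h0]
  linarith [hW ⟨le_rfl, ht.le⟩ ⟨ht.le, le_rfl⟩ ht.le]
theorem eqOn_Icc_of_deriv_deriv_eq_mul_add {q g y z : ℝ → ℝ} {a b K : ℝ}
    (hqK : ∀ s ∈ Icc a b, |q s| ≤ K) (hy : ContDiff ℝ 2 y) (hz : ContDiff ℝ 2 z)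
    (hy'' : ∀ s ∈ Icc a b, deriv (deriv y) s = q s * y s + g s)
    (hz'' : ∀ s ∈ Icc a b, deriv (deriv z) s = q s * z s + g s)
    (ha : y a = z a) (ha' : deriv y a = deriv z a) :
    ∀ s ∈ Icc a b, y s = z s ∧ deriv y s = deriv z s := by
  -- Grönwall for the first-order system `u = (y - z, y' - z')`, with the sup norm on `ℝ × ℝ`
  set u : ℝ → ℝ × ℝ := fun s => (y s - z s, deriv y s - deriv z s)
  have hu : ∀ s, HasDerivAt u (deriv y s - deriv z s, deriv (deriv y) s - deriv (deriv z) s) s :=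
    fun s => ((hy.differentiable two_ne_zero s).hasDerivAt.sub
      (hz.differentiable two_ne_zero s).hasDerivAt).prodMk
      ((hy.differentiable_deriv_two s).hasDerivAt.sub (hz.differentiable_deriv_two s).hasDerivAt)
  have hzero := eq_zero_of_abs_deriv_le_mul_abs_self_of_eq_zero_right
    (f := u) (K := max 1 K) (a := a) (b := b)
    (fun s _ => (hu s).continuousAt.continuousWithinAt) (fun s _ => (hu s).hasDerivWithinAt)
    (by simp [u, ha, ha']) fun s hs => by
      have hs' : s ∈ Icc a b := Ico_subset_Icc_self hs
      rw [hy'' s hs', hz'' s hs',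
        show q s * y s + g s - (q s * z s + g s) = q s * (y s - z s) by ring]
      simp only [u, Prod.norm_def, Real.norm_eq_abs, abs_mul]
      refine max_le ((le_max_right _ _).trans
        (le_mul_of_one_le_left (by positivity) (le_max_left _ _))) ?_
      gcongr
      · exact (hqK s hs').trans (le_max_right _ _)
      · exact le_max_left _ _
  intro s hs
  simpa [u, sub_eq_zero] using hzero s hs

theorem exists_pos_sq_gt_mul_lt_pi_div_two {K L : ℝ} (hL : 0 < L)
    (hKL : K * L ^ 2 < π ^ 2 / 4) : ∃ k, 0 < k ∧ K < k ^ 2 ∧ k * L < π / 2 := by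
  have hsqrt : √K < π / 2 / L := by
    rw [sqrt_lt' (by positivity), div_pow, lt_div_iff₀ (by positivity)]
    linarith
  obtain ⟨k, hKk, hkL⟩ := exists_between hsqrt
  have hk : 0 < k := (sqrt_nonneg K).trans_lt hKk
  exact ⟨k, hk, (sqrt_lt' hk).mp hKk, (lt_div_iff₀ hL).mp hkL⟩

theorem deriv_add_const_mul {f g : ℝ → ℝ} (hf : Differentiable ℝ f) (hg : Differentiable ℝ g)
    (c : ℝ) : deriv (fun s => f s + c * g s) = fun s => deriv f s + c * deriv g s :=
  funext fun s => ((hf s).hasDerivAt.add ((hg s).hasDerivAt.const_mul c)).deriv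

theorem deriv_deriv_add_const_mul_eq_mul_add {q g y₁ y₂ : ℝ → ℝ} {S : Set ℝ}
    (hy₁ : ContDiff ℝ 2 y₁) (hy₂ : ContDiff ℝ 2 y₂)
    (hode₁ : ∀ s ∈ S, deriv (deriv y₁) s = q s * y₁ s + g s)
    (hode₂ : ∀ s ∈ S, deriv (deriv y₂) s = q s * y₂ s) (c : ℝ) :
    ∀ s ∈ S, deriv (deriv (fun s => y₁ s + c * y₂ s)) s = q s * (y₁ s + c * y₂ s) + g s := by
  intro s hs
  rw [deriv_add_const_mul (hy₁.differentiable two_ne_zero) (hy₂.differentiable two_ne_zero),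
    deriv_add_const_mul hy₁.differentiable_deriv_two hy₂.differentiable_deriv_two]
  simp only [hode₁ s hs, hode₂ s hs]
  ring

theorem slbvp_unique_solution_general (L K : ℝ) (hL : 0 < L)
    (hKL : K * L ^ 2 < π ^ 2 / 4) (q g : ℝ → ℝ)
    (hqK : ∀ s ∈ Icc 0 L, |q s| ≤ K)
    (J₁ : ℝ → ℝ) (hJ₁ : ContDiff ℝ 2 J₁)
    (hode₁ : ∀ s ∈ Icc 0 L, deriv (deriv J₁) s = q s * J₁ s + g s)
    (hJ₁0 : J₁ 0 = 0) (hJ₁0' : deriv J₁ 0 = 0)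
    (J₂ : ℝ → ℝ) (hJ₂ : ContDiff ℝ 2 J₂)
    (hode₂ : ∀ s ∈ Icc 0 L, deriv (deriv J₂) s = q s * J₂ s)
    (hJ₂0 : J₂ 0 = 0) (hJ₂0' : deriv J₂ 0 = 1) :
    -- existence: `J₁ + v J₂` with `v = −J₁'(L)/J₂'(L)` solves the BVP
    ((fun s => J₁ s + (-(deriv J₁ L) / deriv J₂ L) * J₂ s) 0 = 0 ∧
      deriv (fun s => J₁ s + (-(deriv J₁ L) / deriv J₂ L) * J₂ s) L = 0 ∧
      ∀ s ∈ Icc 0 L,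
        deriv (deriv (fun s => J₁ s + (-(deriv J₁ L) / deriv J₂ L) * J₂ s)) s
          = q s * (J₁ s + (-(deriv J₁ L) / deriv J₂ L) * J₂ s) + g s) ∧
    -- uniqueness: any solution of the BVP coincides with it on `[0, L]`
    (∀ J : ℝ → ℝ, ContDiff ℝ 2 J →
      (∀ s ∈ Icc 0 L, deriv (deriv J) s = q s * J s + g s) →
      J 0 = 0 → deriv J L = 0 →
      ∀ s ∈ Icc 0 L, J s = J₁ s + (-(deriv J₁ L) / deriv J₂ L) * J₂ s) := by
  obtain ⟨k, hk, hKk, hkL⟩ := exists_pos_sq_gt_mul_lt_pi_div_two hL hKL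
  have hJ₂L : deriv J₂ L ≠ 0 := (deriv_pos_of_deriv_deriv_eq_mul hk hkL
    (fun s hs => by linarith [neg_abs_le (q s), hqK s hs]) hJ₂ hode₂ hJ₂0 (hJ₂0' ▸ one_pos)
    L ⟨hL.le, le_rfl⟩).ne'
  have hderiv := deriv_add_const_mul (hJ₁.differentiable two_ne_zero)
    (hJ₂.differentiable two_ne_zero)
  have hshoot := deriv_deriv_add_const_mul_eq_mul_add hJ₁ hJ₂ hode₁ hode₂
  refine ⟨⟨by simp [hJ₁0, hJ₂0], ?_, hshoot _⟩, fun J hJ hodeJ hJ0 hJL s hs => ?_⟩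
  · rw [hderiv]
    field_simp
    ring
  -- `J` is the shot with initial slope `J'(0)`, and `J'(L) = 0` forces that slope to be `v`
  have hJ_eq := eqOn_Icc_of_deriv_deriv_eq_mul_add hqK hJ (by fun_prop) hodeJ (hshoot (deriv J 0))
    (by simp [hJ0, hJ₁0, hJ₂0]) (by simp [hderiv, hJ₁0', hJ₂0'])
  have hslope : deriv J 0 = -(deriv J₁ L) / deriv J₂ L := by
    have hL' := (hJ_eq L ⟨hL.le, le_rfl⟩).2
    rw [hJL, hderiv] at hL'
    field_simp
    linarith
  rw [← hslope]
  exact (hJ_eq s hs).1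

/-- the Sturm–Liouville BVP `J'' = q J + g`, `J(0) = 0`, `J'(L) = 0`
has a unique solution, given by `J = J⁽¹⁾ + v J⁽²⁾` with
`v = −J⁽¹⁾'(L)/J⁽²⁾'(L)`, where `J⁽¹⁾` solves `J'' = qJ + g`, `J(0) = J'(0) = 0`,
and `J⁽²⁾` solves `J'' = qJ`, `J(0) = 0`, `J'(0) = 1`.  Hypotheses: `q, g`
continuous on `[0,L]`, `|q| ≤ K`, `K L² < π²/4`. -/
theorem slbvp_unique_solution (L K : ℝ) (hL : 0 < L) (hK : 0 ≤ K)
    (hKL : K * L ^ 2 < π ^ 2 / 4) (q g : ℝ → ℝ)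
    (hq : ContinuousOn q (Icc 0 L)) (hg : ContinuousOn g (Icc 0 L))
    (hqK : ∀ s ∈ Icc 0 L, |q s| ≤ K)
    (J₁ : ℝ → ℝ) (hJ₁ : ContDiff ℝ 2 J₁)
    (hode₁ : ∀ s ∈ Icc 0 L, deriv (deriv J₁) s = q s * J₁ s + g s)
    (hJ₁0 : J₁ 0 = 0) (hJ₁0' : deriv J₁ 0 = 0)
    (J₂ : ℝ → ℝ) (hJ₂ : ContDiff ℝ 2 J₂)
    (hode₂ : ∀ s ∈ Icc 0 L, deriv (deriv J₂) s = q s * J₂ s)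
    (hJ₂0 : J₂ 0 = 0) (hJ₂0' : deriv J₂ 0 = 1) :
    -- existence: `J₁ + v J₂` with `v = −J₁'(L)/J₂'(L)` solves the BVP
    ((fun s => J₁ s + (-(deriv J₁ L) / deriv J₂ L) * J₂ s) 0 = 0 ∧
      deriv (fun s => J₁ s + (-(deriv J₁ L) / deriv J₂ L) * J₂ s) L = 0 ∧
      ∀ s ∈ Icc 0 L,
        deriv (deriv (fun s => J₁ s + (-(deriv J₁ L) / deriv J₂ L) * J₂ s)) s
          = q s * (J₁ s + (-(deriv J₁ L) / deriv J₂ L) * J₂ s) + g s) ∧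
    -- uniqueness: any solution of the BVP coincides with it on `[0, L]`
    (∀ J : ℝ → ℝ, ContDiff ℝ 2 J →
      (∀ s ∈ Icc 0 L, deriv (deriv J) s = q s * J s + g s) →
      J 0 = 0 → deriv J L = 0 →
      ∀ s ∈ Icc 0 L, J s = J₁ s + (-(deriv J₁ L) / deriv J₂ L) * J₂ s) :=
  slbvp_unique_solution_general L K hL hKL q g hqK J₁ hJ₁ hode₁ hJ₁0 hJ₁0' J₂ hJ₂ hode₂ hJ₂0 hJ₂0'
end

section
/- Any solution of J'' = q(s)J with J(0) = 0, J'(0) = 1 and |q| ≤ K satisfies the two-sided derivative bounds cos(√K s) ≤ J'(s) ≤ cosh(√K s) for all s ∈ [0, min(L, π/(2√K))]. -/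
/-!
Put `r = √K`. Wherever `J ≥ 0`, the bound `|q| ≤ r²` gives `-r² J ≤ J'' ≤ r² J`.
The lower inequality makes `J' cos rt + r J sin rt` and `J' sin rt - r J cos rt` nondecreasing as
long as `rt ≤ π/2`, and `J'` is their combination with the nonnegative weights `cos rt`, `sin rt`;
this gives `J' ≥ cos rt`. The upper inequality makes `e^{∓rt} (J' ± r J)` nonincreasing, hence
`≤ 1`, and averaging gives `J' ≤ cosh rt`. The sign of `J` is secured by a first-zero argument:
at a first zero `t₀`, integrating `J' ≥ cos rt` would give `r J t₀ ≥ sin r t₀ > 0`.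
-/

open Real Set Filter Topology

theorem le_on_Icc_of_hasDerivAt_le {f g f' g' : ℝ → ℝ} {a b : ℝ}
    (hf : ∀ t, HasDerivAt f (f' t) t) (hg : ∀ t, HasDerivAt g (g' t) t)
    (ha : f a ≤ g a) (hderiv : ∀ t ∈ Ioo a b, f' t ≤ g' t) :
    ∀ t ∈ Icc a b, f t ≤ g t := by
  intro t ht
  have hdiff : ∀ t, HasDerivAt (fun t => g t - f t) (g' t - f' t) t := fun t => (hg t).sub (hf t)
  have hmono : MonotoneOn (fun t => g t - f t) (Icc a b) :=
    monotoneOn_of_hasDerivWithinAt_nonneg (convex_Icc a b)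
      (fun t _ => (hdiff t).continuousAt.continuousWithinAt)
      (fun t _ => (hdiff t).hasDerivWithinAt)
      (fun t ht => sub_nonneg.2 (hderiv t (by rwa [interior_Icc] at ht)))
  have := hmono (left_mem_Icc.2 (ht.1.trans ht.2)) ht ht.1
  dsimp only at this
  linarith

theorem eventually_nhdsGT_pos_of_hasDerivAt {f : ℝ → ℝ} {f' a : ℝ} (hf : HasDerivAt f f' a)
    (ha : f a = 0) (hf' : 0 < f') : ∀ᶠ t in 𝓝[>] a, 0 < f t := by
  have hslope := (hasDerivAt_iff_tendsto_slope_left_right.1 hf).2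
  filter_upwards [hslope.eventually (lt_mem_nhds hf'), self_mem_nhdsWithin] with t hpos ht
  rw [slope_def_field, ha, sub_zero] at hpos
  exact (div_pos_iff_of_pos_right (sub_pos.2 ht)).1 hpos

theorem ContinuousOn.forall_Ioc_pos {f : ℝ → ℝ} {a b : ℝ} (hf : ContinuousOn f (Icc a b))
    (hstart : ∀ᶠ t in 𝓝[>] a, 0 < f t)
    (hstep : ∀ t ∈ Ioc a b, (∀ u ∈ Ioo a t, 0 < f u) → 0 < f t) :
    ∀ t ∈ Ioc a b, 0 < f t := by
  by_contra! ⟨t₁, ht₁, hft₁⟩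
  obtain ⟨δ, hδ, hδpos⟩ := mem_nhdsGT_iff_exists_Ioo_subset.1 hstart
  have hδt : ∀ t ∈ Ioc a b, f t ≤ 0 → δ ≤ t := fun t ht hft =>
    not_lt.1 fun htδ => (hδpos ⟨ht.1, htδ⟩ : 0 < f t).not_ge hft
  set S := Icc δ b ∩ f ⁻¹' Iic 0
  have hS : IsClosed S :=
    (hf.mono (Icc_subset_Icc_left (le_of_lt hδ))).preimage_isClosed_of_isClosed isClosed_Icc
      isClosed_Iic
  have ht₀ : sInf S ∈ S :=
    hS.csInf_mem ⟨t₁, ⟨hδt t₁ ht₁ hft₁, ht₁.2⟩, hft₁⟩ (bddBelow_Icc.mono inter_subset_left)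
  refine (hstep (sInf S) ⟨lt_of_lt_of_le hδ ht₀.1.1, ht₀.1.2⟩ fun u hu => ?_).not_ge ht₀.2
  by_contra! hfu
  have hu' : u ∈ Ioc a b := ⟨hu.1, hu.2.le.trans ht₀.1.2⟩
  exact hu.2.not_ge (csInf_le (bddBelow_Icc.mono inter_subset_left)
    ⟨⟨hδt u hu' hfu, hu'.2⟩, hfu⟩)

section Comparison

variable {J J' J'' : ℝ → ℝ} {r b : ℝ}

theorem cos_mul_le_of_second_deriv_ge (hJ : ∀ t, HasDerivAt J (J' t) t)
    (hJ' : ∀ t, HasDerivAt J' (J'' t) t) (h0 : J 0 = 0) (h1 : J' 0 = 1) (hr : 0 ≤ r)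
    (hb : r * b ≤ π / 2) (hineq : ∀ t ∈ Ioo 0 b, -(r ^ 2 * J t) ≤ J'' t) :
    ∀ t ∈ Icc 0 b, cos (r * t) ≤ J' t := by
  have hrt : ∀ t, HasDerivAt (fun t => r * t) r t := fun t => hasDerivAt_const_mul r
  have hV : ∀ t, HasDerivAt (fun t => J' t * cos (r * t) + r * J t * sin (r * t))
      ((J'' t + r ^ 2 * J t) * cos (r * t)) t := fun t =>
    (((hJ' t).mul (hrt t).cos).add (((hJ t).const_mul r).mul (hrt t).sin)).congr_deriv (by ring)
  have hW : ∀ t, HasDerivAt (fun t => J' t * sin (r * t) - r * J t * cos (r * t))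
      ((J'' t + r ^ 2 * J t) * sin (r * t)) t := fun t =>
    (((hJ' t).mul (hrt t).sin).sub (((hJ t).const_mul r).mul (hrt t).cos)).congr_deriv (by ring)
  have hangle : ∀ t ∈ Icc 0 b, 0 ≤ r * t ∧ r * t ≤ π / 2 := fun t ht =>
    ⟨mul_nonneg hr ht.1, (mul_le_mul_of_nonneg_left ht.2 hr).trans hb⟩
  have hcos : ∀ t ∈ Icc 0 b, 0 ≤ cos (r * t) := fun t ht =>
    cos_nonneg_of_mem_Icc ⟨by linarith [pi_pos, (hangle t ht).1], (hangle t ht).2⟩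
  have hsin : ∀ t ∈ Icc 0 b, 0 ≤ sin (r * t) := fun t ht =>
    sin_nonneg_of_nonneg_of_le_pi (hangle t ht).1 (by linarith [pi_pos, (hangle t ht).2])
  have hV_ge := le_on_Icc_of_hasDerivAt_le (fun t => hasDerivAt_const t 1) hV (by simp [h0, h1])
    fun t ht => mul_nonneg (by linarith [hineq t ht]) (hcos t (Ioo_subset_Icc_self ht))
  have hW_ge := le_on_Icc_of_hasDerivAt_le (fun t => hasDerivAt_const t 0) hW (by simp [h0])
    fun t ht => mul_nonneg (by linarith [hineq t ht]) (hsin t (Ioo_subset_Icc_self ht))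
  intro t ht
  have hsplit : J' t = (J' t * cos (r * t) + r * J t * sin (r * t)) * cos (r * t) +
      (J' t * sin (r * t) - r * J t * cos (r * t)) * sin (r * t) := by
    linear_combination (-J' t) * sin_sq_add_cos_sq (r * t)
  rw [hsplit]
  linarith [mul_le_mul_of_nonneg_right (hV_ge t ht) (hcos t ht),
    mul_nonneg (hW_ge t ht) (hsin t ht)]

theorem le_cosh_mul_of_second_deriv_le (hJ : ∀ t, HasDerivAt J (J' t) t)
    (hJ' : ∀ t, HasDerivAt J' (J'' t) t) (h0 : J 0 = 0) (h1 : J' 0 = 1)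
    (hineq : ∀ t ∈ Ioo 0 b, J'' t ≤ r ^ 2 * J t) :
    ∀ t ∈ Icc 0 b, J' t ≤ cosh (r * t) := by
  have hP : ∀ t, HasDerivAt (fun t => exp (-(r * t)) * (J' t + r * J t))
      (exp (-(r * t)) * (J'' t - r ^ 2 * J t)) t := fun t => by
    have he : HasDerivAt (fun t => exp (-(r * t))) (exp (-(r * t)) * -r) t := by
      simpa using (hasDerivAt_const_mul (x := t) r).neg.exp
    have hsum : HasDerivAt (fun t => J' t + r * J t) (J'' t + r * J' t) t :=
      (hJ' t).add ((hJ t).const_mul r)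
    exact (he.mul hsum).congr_deriv (by ring)
  have hM : ∀ t, HasDerivAt (fun t => exp (r * t) * (J' t - r * J t))
      (exp (r * t) * (J'' t - r ^ 2 * J t)) t := fun t => by
    have he : HasDerivAt (fun t => exp (r * t)) (exp (r * t) * r) t := by
      simpa using (hasDerivAt_const_mul (x := t) r).exp
    have hdiff : HasDerivAt (fun t => J' t - r * J t) (J'' t - r * J' t) t :=
      (hJ' t).sub ((hJ t).const_mul r)
    exact (he.mul hdiff).congr_deriv (by ring)
  have hP_le := le_on_Icc_of_hasDerivAt_le (a := 0) (b := b) hP (fun t => hasDerivAt_const t 1)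
    (by simp [h0, h1]) fun t ht =>
      mul_nonpos_of_nonneg_of_nonpos (exp_pos _).le (by linarith [hineq t ht])
  have hM_le := le_on_Icc_of_hasDerivAt_le (a := 0) (b := b) hM (fun t => hasDerivAt_const t 1)
    (by simp [h0, h1]) fun t ht =>
      mul_nonpos_of_nonneg_of_nonpos (exp_pos _).le (by linarith [hineq t ht])
  intro t ht
  have hinv : exp (r * t) * exp (-(r * t)) = 1 := by rw [← exp_add, add_neg_cancel, exp_zero]
  have hsplit : 2 * J' t = exp (r * t) * (exp (-(r * t)) * (J' t + r * J t)) +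
      exp (-(r * t)) * (exp (r * t) * (J' t - r * J t)) := by
    linear_combination (-2 * J' t) * hinv
  rw [cosh_eq]
  linarith [mul_le_mul_of_nonneg_left (hP_le t ht) (exp_pos (r * t)).le,
    mul_le_mul_of_nonneg_left (hM_le t ht) (exp_pos (-(r * t))).le]

theorem pos_of_second_deriv_ge_of_nonneg (hJ : ∀ t, HasDerivAt J (J' t) t)
    (hJ' : ∀ t, HasDerivAt J' (J'' t) t) (h0 : J 0 = 0) (h1 : J' 0 = 1) (hr : 0 < r)
    (hb : r * b ≤ π / 2) (hineq : ∀ t ∈ Ioo 0 b, 0 ≤ J t → -(r ^ 2 * J t) ≤ J'' t) :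
    ∀ t ∈ Ioc 0 b, 0 < J t := by
  refine ContinuousOn.forall_Ioc_pos (fun t _ => (hJ t).continuousAt.continuousWithinAt)
    (eventually_nhdsGT_pos_of_hasDerivAt (hJ 0) h0 (h1 ▸ one_pos)) fun t ht hpos => ?_
  have hrt : r * t ≤ π / 2 := (mul_le_mul_of_nonneg_left ht.2 hr.le).trans hb
  have hcos := cos_mul_le_of_second_deriv_ge hJ hJ' h0 h1 hr.le hrt
    fun s hs => hineq s ⟨hs.1, hs.2.trans_le ht.2⟩ (hpos s hs).le
  have hsin := le_on_Icc_of_hasDerivAt_le (a := 0) (b := t)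
    (fun s => (hasDerivAt_const_mul (x := s) r).sin) (fun s => (hJ s).const_mul r) (by simp [h0])
    fun s hs => by
      rw [mul_comm]
      exact mul_le_mul_of_nonneg_left (hcos s (Ioo_subset_Icc_self hs)) hr.le
  have hsin_pos : 0 < sin (r * t) :=
    sin_pos_of_pos_of_lt_pi (mul_pos hr ht.1) (by linarith [pi_pos])
  exact (mul_pos_iff_of_pos_left hr).1 (hsin_pos.trans_le (hsin t ⟨ht.1.le, le_rfl⟩))

end Comparison

theorem shooting_deriv_comparison_general (L K : ℝ) (hK : 0 < K)
    (q : ℝ → ℝ)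
    (hqK : ∀ s ∈ Icc 0 L, |q s| ≤ K)
    (J : ℝ → ℝ) (hJ : ContDiff ℝ 2 J)
    (hode : ∀ s ∈ Icc 0 L, deriv (deriv J) s = q s * J s)
    (h0 : J 0 = 0) (h1 : deriv J 0 = 1) :
    ∀ s ∈ Icc 0 (min L (π / (2 * Real.sqrt K))),
      Real.cos (Real.sqrt K * s) ≤ deriv J s ∧
      deriv J s ≤ Real.cosh (Real.sqrt K * s) := by
  set r := √K
  have hr : 0 < r := sqrt_pos.2 hK
  set T := min L (π / (2 * r))
  have hrT : r * T ≤ π / 2 := by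
    have := min_le_right L (π / (2 * r))
    rw [le_div_iff₀ (by positivity)] at this
    linarith
  have hJd : ∀ t, HasDerivAt J (deriv J t) t := fun t =>
    (hJ.differentiable two_ne_zero t).hasDerivAt
  have hJ'd : ∀ t, HasDerivAt (deriv J) (deriv (deriv J) t) t := fun t =>
    (hJ.differentiable_deriv_two t).hasDerivAt
  have hineq : ∀ t ∈ Ioo 0 T, 0 ≤ J t → |deriv (deriv J) t| ≤ r ^ 2 * J t := fun t ht hJt => by
    have htL : t ∈ Icc 0 L := ⟨ht.1.le, ht.2.le.trans (min_le_left _ _)⟩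
    rw [hode t htL, abs_mul, abs_of_nonneg hJt, sq_sqrt hK.le]
    exact mul_le_mul_of_nonneg_right (hqK t htL) hJt
  have hJ_nonneg : ∀ t ∈ Ioo 0 T, 0 ≤ J t := fun t ht =>
    (pos_of_second_deriv_ge_of_nonneg hJd hJ'd h0 h1 hr hrT
      (fun t ht hJt => (abs_le.1 (hineq t ht hJt)).1) t ⟨ht.1, ht.2.le⟩).le
  intro s hs
  exact ⟨cos_mul_le_of_second_deriv_ge hJd hJ'd h0 h1 hr.le hrT
      (fun t ht => (abs_le.1 (hineq t ht (hJ_nonneg t ht))).1) s hs,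
    le_cosh_mul_of_second_deriv_le hJd hJ'd h0 h1
      (fun t ht => (abs_le.1 (hineq t ht (hJ_nonneg t ht))).2) s hs⟩

/-- any solution of `J'' = q(s) J`, `J(0) = 0`, `J'(0) = 1`,
with `|q| ≤ K`, satisfies the two-sided comparison bounds
`cos(√K s) ≤ J'(s) ≤ cosh(√K s)` for all `s ∈ [0, min(L, π/(2√K))]`. -/
theorem shooting_deriv_comparison (L K : ℝ) (hL : 0 < L) (hK : 0 < K)
    (q : ℝ → ℝ) (hq : ContinuousOn q (Icc 0 L))
    (hqK : ∀ s ∈ Icc 0 L, |q s| ≤ K)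
    (J : ℝ → ℝ) (hJ : ContDiff ℝ 2 J)
    (hode : ∀ s ∈ Icc 0 L, deriv (deriv J) s = q s * J s)
    (h0 : J 0 = 0) (h1 : deriv J 0 = 1) :
    ∀ s ∈ Icc 0 (min L (π / (2 * Real.sqrt K))),
      Real.cos (Real.sqrt K * s) ≤ deriv J s ∧
      deriv J s ≤ Real.cosh (Real.sqrt K * s) :=
  shooting_deriv_comparison_general L K hK q hqK J hJ hode h0 h1
end
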